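/- Let X be a δ-hyperbolic geodesic metric space. For every l' ∈ ℕ and D ≥ 2δ there exists l ∈ ℕ such that any two geodesic rays c₁, c₂ : [0,∞) → X stemming from the same point which (l, D)-fellow travel (i.e., d(c₁(i), c₂(i)) ≤ D for all 0 ≤ i ≤ l) in fact (l', 2δ)-fellow travel (i.e., d(c₁(i), c₂(i)) ≤ 2δ for all 0 ≤ i ≤ l'). -/
import Mathlib


/-- `c` restricted to `[a,b]` is a unit-speed geodesic (isometric embedding). -/
def IsGeodesicOn {X : Type*} [MetricSpace X] (c : ℝ → X) (a b : ℝ) : Prop :=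
  ∀ s ∈ Set.Icc a b, ∀ t ∈ Set.Icc a b, dist (c s) (c t) = |s - t|

/-- `c` is a geodesic from `x` to `y`, parametrized on `[0, dist x y]`. -/
def IsGeodesicFromTo {X : Type*} [MetricSpace X] (c : ℝ → X) (x y : X) : Prop :=
  c 0 = x ∧ c (dist x y) = y ∧ IsGeodesicOn c 0 (dist x y)

/-- A geodesic metric space: any two points are joined by a geodesic. -/
def GeodesicSpace (X : Type*) [MetricSpace X] : Prop :=
  ∀ x y : X, ∃ c : ℝ → X, IsGeodesicFromTo c x y

/-- Rips δ-hyperbolicity: each side of a geodesic triangle lies in the δ-neighborhood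
of the union of the other two sides. -/
def RipsHyperbolic (X : Type*) [MetricSpace X] (δ : ℝ) : Prop :=
  ∀ x y z : X, ∀ cxy cyz czx : ℝ → X,
    IsGeodesicFromTo cxy x y → IsGeodesicFromTo cyz y z → IsGeodesicFromTo czx z x →
    ∀ s ∈ Set.Icc (0 : ℝ) (dist x y),
      ∃ p ∈ cyz '' Set.Icc (0 : ℝ) (dist y z) ∪ czx '' Set.Icc (0 : ℝ) (dist z x),
        dist (cxy s) p ≤ δ

/-- A geodesic ray: a unit-speed isometric embedding of `[0,∞)`. -/
def IsGeodesicRay {X : Type*} [MetricSpace X] (c : ℝ → X) : Prop :=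
  ∀ s ∈ Set.Ici (0 : ℝ), ∀ t ∈ Set.Ici (0 : ℝ), dist (c s) (c t) = |s - t|

/-- Two geodesic rays are asymptotic if their images are at finite Hausdorff distance. -/
def RaysAsymptotic {X : Type*} [MetricSpace X] (c c' : ℝ → X) : Prop :=
  EMetric.hausdorffEdist (c '' Set.Ici (0 : ℝ)) (c' '' Set.Ici (0 : ℝ)) < ⊤

/-- for every `l'` and `D ≥ 2δ` there is `l` such that geodesic rays
stemming from the same point that `(l,D)`-fellow travel in fact `(l',2δ)`-fellow travel. -/
theorem fellow_travel_improvement {X : Type*} [MetricSpace X] (δ : ℝ) (hδ : 0 < δ)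
    (hgeo : GeodesicSpace X) (hhyp : RipsHyperbolic X δ)
    (l' : ℕ) (D : ℝ) (hD : 2 * δ ≤ D) :
    ∃ l : ℕ, ∀ c c' : ℝ → X, IsGeodesicRay c → IsGeodesicRay c' → c 0 = c' 0 →
      (∀ i : ℝ, 0 ≤ i → i ≤ (l : ℝ) → dist (c i) (c' i) ≤ D) →
      (∀ i : ℝ, 0 ≤ i → i ≤ (l' : ℝ) → dist (c i) (c' i) ≤ 2 * δ) := by
  classical
  refine ⟨l' + ⌈D + δ⌉₊ + 1, ?_⟩
  intro c c' hc hc' h0 hft i hi0 hil'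
  set L : ℝ := ((l' + ⌈D + δ⌉₊ + 1 : ℕ) : ℝ) with hLdef
  have hLpos : (0:ℝ) ≤ L := Nat.cast_nonneg _
  have hl'L : (l' : ℝ) ≤ L := by
    rw [hLdef]; push_cast; linarith [Nat.cast_nonneg (α := ℝ) ⌈D + δ⌉₊]
  have hiL : i ≤ L := le_trans hil' hl'L
  have hdxy : dist (c 0) (c L) = L := by
    rw [hc 0 (Set.mem_Ici.2 le_rfl) L (Set.mem_Ici.2 hLpos)]
    rw [zero_sub, abs_neg, abs_of_nonneg hLpos]
  have hdzx : dist (c' L) (c 0) = L := by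
    rw [h0, hc' L (Set.mem_Ici.2 hLpos) 0 (Set.mem_Ici.2 le_rfl), abs_of_nonneg (by linarith)]
    ring
  -- first side: c restricted to [0, L]
  have hcgeo : IsGeodesicFromTo c (c 0) (c L) := by
    refine ⟨rfl, by rw [hdxy], ?_⟩
    intro s hs t ht
    exact hc s (Set.mem_Ici.2 hs.1) t (Set.mem_Ici.2 ht.1)
  -- third side: reverse of c'
  have hczx : IsGeodesicFromTo (fun t => c' (L - t)) (c' L) (c 0) := by
    refine ⟨by simp, ?_, ?_⟩
    · rw [hdzx]; simp [h0.symm]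
    · rw [hdzx]
      intro s hs t ht
      rw [hc' (L - s) (Set.mem_Ici.2 (by linarith [hs.2])) (L - t) (Set.mem_Ici.2 (by linarith [ht.2]))]
      rw [show L - s - (L - t) = -(s - t) by ring, abs_neg]
  -- second side from hgeo
  obtain ⟨cyz, hyz0, hyzend, hyzgeo⟩ := hgeo (c L) (c' L)
  obtain ⟨p, hp, hdp⟩ := hhyp (c 0) (c L) (c' L) c cyz (fun t => c' (L - t))
    hcgeo ⟨hyz0, hyzend, hyzgeo⟩ hczx i (by rw [hdxy]; exact ⟨hi0, hiL⟩)
  have hDδ : D + δ + 1 ≤ L - i := by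
    have h1 : (D + δ : ℝ) ≤ (⌈D + δ⌉₊ : ℝ) := Nat.le_ceil _
    have h2 : L - i ≥ (⌈D + δ⌉₊ : ℝ) + 1 := by
      rw [hLdef]
      push_cast
      linarith
    linarith
  rcases hp with ⟨u, hu, rfl⟩ | ⟨u, hu, rfl⟩
  · -- p on side yz: contradiction
    exfalso
    have hyD : dist (c L) (c' L) ≤ D := hft L hLpos le_rfl
    have hu' : dist (cyz u) (c L) = u := by
      rw [← hyz0, hyzgeo u hu 0 ⟨le_rfl, dist_nonneg⟩, sub_zero, abs_of_nonneg hu.1]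
    have hdil : dist (c i) (c L) = L - i := by
      rw [hc i (Set.mem_Ici.2 hi0) L (Set.mem_Ici.2 hLpos), abs_of_nonpos (by linarith)]
      ring
    have : dist (c i) (c L) ≤ δ + u :=
      calc dist (c i) (c L) ≤ dist (c i) (cyz u) + dist (cyz u) (c L) := dist_triangle _ _ _
      _ ≤ δ + u := by rw [hu']; linarith
    have huD : u ≤ D := le_trans hu.2 hyD
    rw [hdil] at this
    linarith
  · -- p = c' (L - u) on reversed side
    rw [hdzx] at hu
    set t : ℝ := L - u with htdef
    have ht0 : 0 ≤ t := by simp [htdef]; linarith [hu.2]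
    have h1 : dist (c i) (c' t) ≤ δ := hdp
    have hdi : dist (c i) (c 0) = i := by
      rw [hc i (Set.mem_Ici.2 hi0) 0 (Set.mem_Ici.2 le_rfl), sub_zero, abs_of_nonneg hi0]
    have hdt : dist (c' t) (c 0) = t := by
      rw [h0, hc' t (Set.mem_Ici.2 ht0) 0 (Set.mem_Ici.2 le_rfl), sub_zero, abs_of_nonneg ht0]
    have h2 : |i - t| ≤ δ := by
      have := abs_dist_sub_le (c i) (c' t) (c 0)
      rw [hdi, hdt] at this
      exact le_trans this h1
    have h3 : dist (c' t) (c' i) ≤ δ := by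
      rw [hc' t (Set.mem_Ici.2 ht0) i (Set.mem_Ici.2 hi0)]
      rw [abs_sub_comm] at h2
      exact h2
    calc dist (c i) (c' i) ≤ dist (c i) (c' t) + dist (c' t) (c' i) := dist_triangle _ _ _
    _ ≤ δ + δ := by linarith
    _ = 2 * δ := by ring
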